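/- arXiv:2102.04553 — 4 statements merged into one kernel-verified Lean document; each statement's English description precedes it below -/
import Mathlib

section
/- Let x, y, φ solve the Dubins system ẋ = cos φ, ẏ = sin φ, φ̇ = u with initial condition (0, 0, π/2) and control u(t) = s for t ∈ [0, τ₁), u(t) = −s for t ∈ [τ₁, τ₂), u(t) = s for t ≥ τ₂, where s ∈ {−1, 1} and 0 ≤ τ₁ ≤ τ₂ ≤ t. Then x(t) = s(2 cos τ₁ − 1 − 2 cos(2τ₁ − τ₂) + cos(2τ₁ − 2τ₂ + t)), y(t) = 2 sin τ₁ − 2 sin(2τ₁ − τ₂) + sin(2τ₁ − 2τ₂ + t), and φ(t) = π/2 + s(2τ₁ − 2τ₂ + t). -/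
open Set Real

/-!
Along an arc of curvature `k` with `k * k = 1` the heading is affine, `φ' = k`, and the chain
rule gives `(k sin φ)' = cos φ` and `(-k cos φ)' = sin φ`; so the position moves by
`k (sin φ(b) - sin φ(a), cos φ(a) - cos φ(b))` across the arc. Chaining the three arcs of the
CCC control, whose headings at the switching times are `π/2 + s τ₁`, `π/2 + s (2τ₁ - τ₂)` and
`π/2 + s (2τ₁ - 2τ₂ + T)`, gives the stated formulas.
-/

theorem sub_eq_sub_of_hasDerivAt_Ioo {f g f' : ℝ → ℝ} {a b : ℝ} (hab : a ≤ b)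
    (hf : ContinuousOn f (Icc a b)) (hg : ContinuousOn g (Icc a b))
    (hf' : ∀ t ∈ Ioo a b, HasDerivAt f (f' t) t)
    (hg' : ∀ t ∈ Ioo a b, HasDerivAt g (f' t) t) :
    f b - f a = g b - g a := by
  rcases hab.eq_or_lt with rfl | hlt
  · simp
  obtain ⟨c, -, hc⟩ := exists_hasDerivAt_eq_slope (fun t => f t - g t) (fun _ => 0) hlt
    (hf.sub hg) fun t ht => ((hf' t ht).sub (hg' t ht)).congr_deriv (sub_self _)
  have := (div_eq_zero_iff.mp hc.symm).resolve_right (sub_ne_zero.mpr hlt.ne')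
  linarith

theorem dubins_arc_endpoint {x y φ : ℝ → ℝ} {k a b : ℝ} (hk : k * k = 1) (hab : a ≤ b)
    (hxc : ContinuousOn x (Icc a b)) (hyc : ContinuousOn y (Icc a b))
    (hφc : ContinuousOn φ (Icc a b))
    (hx : ∀ t ∈ Ioo a b, HasDerivAt x (Real.cos (φ t)) t)
    (hy : ∀ t ∈ Ioo a b, HasDerivAt y (Real.sin (φ t)) t)
    (hφ : ∀ t ∈ Ioo a b, HasDerivAt φ k t) :
    φ b = φ a + k * (b - a) ∧
    x b = x a + k * (Real.sin (φ b) - Real.sin (φ a)) ∧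
    y b = y a - k * (Real.cos (φ b) - Real.cos (φ a)) := by
  have heading := sub_eq_sub_of_hasDerivAt_Ioo (g := fun t => t * k) hab hφc
    (continuous_mul_const k).continuousOn hφ fun t _ => hasDerivAt_mul_const k
  have east := sub_eq_sub_of_hasDerivAt_Ioo (g := fun t => k * Real.sin (φ t)) hab hxc
    (continuousOn_const.mul (continuous_sin.comp_continuousOn hφc)) hx
    fun t ht => ((hφ t ht).sin.const_mul k).congr_deriv <| by
      linear_combination Real.cos (φ t) * hk
  have north := sub_eq_sub_of_hasDerivAt_Ioo (g := fun t => -k * Real.cos (φ t)) hab hyc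
    (continuousOn_const.mul (continuous_cos.comp_continuousOn hφc)) hy
    fun t ht => ((hφ t ht).cos.const_mul (-k)).congr_deriv <| by
      linear_combination Real.sin (φ t) * hk
  exact ⟨by linear_combination heading, by linear_combination east,
    by linear_combination north⟩

theorem sin_pi_div_two_add_mul {s : ℝ} (hs : s = 1 ∨ s = -1) (θ : ℝ) :
    Real.sin (π / 2 + s * θ) = Real.cos θ := by
  rcases hs with rfl | rfl <;> simp [Real.sin_add]

theorem cos_pi_div_two_add_mul {s : ℝ} (hs : s = 1 ∨ s = -1) (θ : ℝ) :
    Real.cos (π / 2 + s * θ) = -(s * Real.sin θ) := by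
  rcases hs with rfl | rfl <;> simp [Real.cos_add]

/-- Integration of the Dubins dynamics along a CCC control: turn with curvature `s` on
`[0, τ₁)`, curvature `-s` on `[τ₁, τ₂)`, curvature `s` past `τ₂`. -/
theorem dubins_CCC_integration (s τ₁ τ₂ T : ℝ)
    (hs : s = 1 ∨ s = -1)
    (h0 : 0 ≤ τ₁) (h1 : τ₁ ≤ τ₂) (h2 : τ₂ ≤ T)
    (x y φ : ℝ → ℝ)
    (hx0 : x 0 = 0) (hy0 : y 0 = 0) (hφ0 : φ 0 = π / 2)
    (hxc : ContinuousOn x (Icc 0 T)) (hyc : ContinuousOn y (Icc 0 T))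
    (hφc : ContinuousOn φ (Icc 0 T))
    (hx : ∀ t ∈ Ioo 0 τ₁ ∪ Ioo τ₁ τ₂ ∪ Ioo τ₂ T, HasDerivAt x (Real.cos (φ t)) t)
    (hy : ∀ t ∈ Ioo 0 τ₁ ∪ Ioo τ₁ τ₂ ∪ Ioo τ₂ T, HasDerivAt y (Real.sin (φ t)) t)
    (hφ1 : ∀ t ∈ Ioo 0 τ₁, HasDerivAt φ s t)
    (hφ2 : ∀ t ∈ Ioo τ₁ τ₂, HasDerivAt φ (-s) t)
    (hφ3 : ∀ t ∈ Ioo τ₂ T, HasDerivAt φ s t) :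
    x T = s * (2 * Real.cos τ₁ - 1 - 2 * Real.cos (2 * τ₁ - τ₂)
        + Real.cos (2 * τ₁ - 2 * τ₂ + T)) ∧
    y T = 2 * Real.sin τ₁ - 2 * Real.sin (2 * τ₁ - τ₂)
        + Real.sin (2 * τ₁ - 2 * τ₂ + T) ∧
    φ T = π / 2 + s * (2 * τ₁ - 2 * τ₂ + T) := by
  have hss : s * s = 1 := by rcases hs with rfl | rfl <;> norm_num
  have I₁ : Icc 0 τ₁ ⊆ Icc 0 T := Icc_subset_Icc le_rfl (h1.trans h2)
  have I₂ : Icc τ₁ τ₂ ⊆ Icc 0 T := Icc_subset_Icc h0 h2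
  have I₃ : Icc τ₂ T ⊆ Icc 0 T := Icc_subset_Icc (h0.trans h1) le_rfl
  obtain ⟨hφ₁, hx₁, hy₁⟩ := dubins_arc_endpoint hss h0 (hxc.mono I₁) (hyc.mono I₁) (hφc.mono I₁)
    (fun t ht => hx t (.inl (.inl ht))) (fun t ht => hy t (.inl (.inl ht))) hφ1
  obtain ⟨hφ₂, hx₂, hy₂⟩ := dubins_arc_endpoint (k := -s) (by linear_combination hss) h1
    (hxc.mono I₂) (hyc.mono I₂) (hφc.mono I₂)
    (fun t ht => hx t (.inl (.inr ht))) (fun t ht => hy t (.inl (.inr ht))) hφ2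
  obtain ⟨hφ₃, hx₃, hy₃⟩ := dubins_arc_endpoint hss h2 (hxc.mono I₃) (hyc.mono I₃) (hφc.mono I₃)
    (fun t ht => hx t (.inr ht)) (fun t ht => hy t (.inr ht)) hφ3
  have e₁ : φ τ₁ = π / 2 + s * τ₁ := by linear_combination hφ₁ + hφ0
  have e₂ : φ τ₂ = π / 2 + s * (2 * τ₁ - τ₂) := by linear_combination hφ₂ + e₁
  have e₃ : φ T = π / 2 + s * (2 * τ₁ - 2 * τ₂ + T) := by linear_combination hφ₃ + e₂
  simp only [hφ0, e₁, e₂, e₃, sin_pi_div_two_add_mul hs, cos_pi_div_two_add_mul hs,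
    Real.sin_pi_div_two, Real.cos_pi_div_two] at hx₁ hx₂ hx₃ hy₁ hy₂ hy₃
  refine ⟨by linear_combination hx₃ + hx₂ + hx₁ + hx0, ?_, e₃⟩
  linear_combination hy₃ + hy₂ + hy₁ + hy0 + (Real.sin (2 * τ₁ - 2 * τ₂ + T)
    - 2 * Real.sin (2 * τ₁ - τ₂) + 2 * Real.sin τ₁) * hss
end

section
/- The set E_CCC(t) = { P_CCC^{s}(t; τ₁, τ₂) : τ₁ ∈ [0, 2π), τ₂ ∈ [τ₁, t], τ₂ − τ₁ ∈ [0, 2π), s ∈ {−1,1} } is a closed subset of ℝ² × (ℝ/2πℤ) for every t ≥ 0. -/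
/-- Terminal configuration at time `t` of the Dubins car starting at `(0,0,π/2)` along a
CCC-trajectory with first turn direction `s` and switch times `τ₁`, `τ₂`;
the heading is an angle in ℝ/2πℤ. -/
noncomputable def PCCC (s t τ₁ τ₂ : ℝ) : ℝ × ℝ × Real.Angle :=
  (s * (2 * Real.cos τ₁ - 1 - 2 * Real.cos (2 * τ₁ - τ₂)
      + Real.cos (2 * τ₁ - 2 * τ₂ + t)),
   2 * Real.sin τ₁ - 2 * Real.sin (2 * τ₁ - τ₂)
      + Real.sin (2 * τ₁ - 2 * τ₂ + t),
   (↑(Real.pi / 2 + s * (2 * τ₁ - 2 * τ₂ + t)) : Real.Angle))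

/-- The set of terminal points of CCC-trajectories at time `t`. -/
def ECCC (t : ℝ) : Set (ℝ × ℝ × Real.Angle) :=
  {P | ∃ s τ₁ τ₂ : ℝ, (s = 1 ∨ s = -1) ∧
    τ₁ ∈ Set.Ico 0 (2 * Real.pi) ∧ τ₂ ∈ Set.Icc τ₁ t ∧
    τ₂ - τ₁ ∈ Set.Ico 0 (2 * Real.pi) ∧ P = PCCC s t τ₁ τ₂}

lemma PCCC_shift1 (s t τ₁ τ₂ : ℝ) :
    PCCC s t (τ₁ - 2 * Real.pi) (τ₂ - 2 * Real.pi) = PCCC s t τ₁ τ₂ := by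
  unfold PCCC
  have h1 : 2 * (τ₁ - 2 * Real.pi) - (τ₂ - 2 * Real.pi) = (2 * τ₁ - τ₂) - 2 * Real.pi := by ring
  have h2 : 2 * (τ₁ - 2 * Real.pi) - 2 * (τ₂ - 2 * Real.pi) + t = 2 * τ₁ - 2 * τ₂ + t := by ring
  rw [h1, h2, Real.cos_sub_two_pi, Real.sin_sub_two_pi, Real.cos_sub_two_pi, Real.sin_sub_two_pi]

lemma PCCC_shift2 (s t τ₁ τ₂ : ℝ) (hs : s = 1 ∨ s = -1) :
    PCCC s t τ₁ (τ₂ - 2 * Real.pi) = PCCC s t τ₁ τ₂ := by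
  unfold PCCC
  have h1 : 2 * τ₁ - (τ₂ - 2 * Real.pi) = (2 * τ₁ - τ₂) + 2 * Real.pi := by ring
  have h2 : 2 * τ₁ - 2 * (τ₂ - 2 * Real.pi) + t
      = ((2 * τ₁ - 2 * τ₂ + t) + 2 * Real.pi) + 2 * Real.pi := by ring
  rw [h1, h2, Real.cos_add_two_pi, Real.sin_add_two_pi, Real.cos_add_two_pi, Real.sin_add_two_pi,
    Real.cos_add_two_pi, Real.sin_add_two_pi]
  refine Prod.ext rfl (Prod.ext rfl ?_)
  show (↑(Real.pi / 2 + s * ((2 * τ₁ - 2 * τ₂ + t) + 2 * Real.pi + 2 * Real.pi)) : Real.Angle)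
      = ↑(Real.pi / 2 + s * (2 * τ₁ - 2 * τ₂ + t))
  rw [Real.Angle.angle_eq_iff_two_pi_dvd_sub]
  rcases hs with rfl | rfl
  · exact ⟨2, by push_cast; ring⟩
  · exact ⟨-2, by push_cast; ring⟩

theorem ECCC_isClosed (t : ℝ) (ht : 0 ≤ t) : IsClosed (ECCC t) := by
  have hπ : (0 : ℝ) < 2 * Real.pi := by positivity
  set f : ℝ × ℝ × ℝ → ℝ × ℝ × Real.Angle := fun p => PCCC p.1 t p.2.1 p.2.2 with hf
  set K : Set (ℝ × ℝ × ℝ) := {p | (p.1 = 1 ∨ p.1 = -1) ∧ p.2.1 ∈ Set.Icc 0 (2 * Real.pi) ∧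
    p.2.2 ∈ Set.Icc p.2.1 t ∧ p.2.2 - p.2.1 ∈ Set.Icc 0 (2 * Real.pi)} with hK
  -- K is compact
  have hKclosed : IsClosed K := by
    have h1 : IsClosed {p : ℝ × ℝ × ℝ | p.1 = 1 ∨ p.1 = -1} := by
      have : {p : ℝ × ℝ × ℝ | p.1 = 1 ∨ p.1 = -1}
          = Prod.fst ⁻¹' ({1, -1} : Set ℝ) := by
        ext p; simp [Set.mem_preimage]
      rw [this]
      exact ((Set.finite_singleton (-1:ℝ)).insert 1).isClosed.preimage continuous_fst
    refine h1.inter (IsClosed.inter ?_ (IsClosed.inter ?_ ?_))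
    · exact IsClosed.inter (isClosed_le continuous_const (continuous_fst.comp continuous_snd))
        (isClosed_le (continuous_fst.comp continuous_snd) continuous_const)
    · exact IsClosed.inter
        (isClosed_le (continuous_fst.comp continuous_snd) (continuous_snd.comp continuous_snd))
        (isClosed_le (continuous_snd.comp continuous_snd) continuous_const)
    · exact IsClosed.inter
        (isClosed_le continuous_const
          ((continuous_snd.comp continuous_snd).sub (continuous_fst.comp continuous_snd)))
        (isClosed_le
          ((continuous_snd.comp continuous_snd).sub (continuous_fst.comp continuous_snd))
          continuous_const)
  have hKcompact : IsCompact K := by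
    have hCa : IsCompact ((({1, -1} : Set ℝ)) ×ˢ
        (Set.Icc (0:ℝ) (2 * Real.pi) ×ˢ Set.Icc (0:ℝ) t)) :=
      (((Set.finite_singleton (-1:ℝ)).insert 1).isCompact).prod
        (isCompact_Icc.prod isCompact_Icc)
    refine IsCompact.of_isClosed_subset hCa hKclosed ?_
    · rintro ⟨s, τ₁, τ₂⟩ ⟨hs, h1, h2, h3⟩
      refine ⟨?_, h1, le_trans h1.1 h2.1, h2.2⟩
      simpa using hs
  -- f is continuous
  have hfc : Continuous f := by
    refine Continuous.prodMk ?_ (Continuous.prodMk ?_ ?_)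
    · fun_prop
    · fun_prop
    · exact Real.Angle.continuous_coe.comp (by fun_prop)
  -- ECCC t = f '' K
  have hEq : ECCC t = f '' K := by
    ext P
    constructor
    · rintro ⟨s, τ₁, τ₂, hs, h1, h2, h3, rfl⟩
      exact ⟨(s, τ₁, τ₂), ⟨hs, ⟨h1.1, h1.2.le⟩, h2, ⟨h3.1, h3.2.le⟩⟩, rfl⟩
    · rintro ⟨⟨s, τ₁, τ₂⟩, ⟨hs, h1, h2, h3⟩, rfl⟩
      rcases lt_or_eq_of_le h1.2 with hτ1 | hτ1 <;>
        rcases lt_or_eq_of_le h3.2 with hd | hd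
      · exact ⟨s, τ₁, τ₂, hs, ⟨h1.1, hτ1⟩, h2, ⟨h3.1, hd⟩, rfl⟩
      · -- τ₂ - τ₁ = 2π : shift τ₂ down
        refine ⟨s, τ₁, τ₂ - 2 * Real.pi, hs, ⟨h1.1, hτ1⟩, ?_, ?_, ?_⟩
        · constructor
          · linarith [hd]
          · linarith [h2.2]
        · exact ⟨by linarith, by linarith⟩
        · exact (PCCC_shift2 s t τ₁ τ₂ hs).symm
      · -- τ₁ = 2π : shift both down
        refine ⟨s, τ₁ - 2 * Real.pi, τ₂ - 2 * Real.pi, hs, ?_, ?_, ?_, ?_⟩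
        · constructor <;> linarith [hτ1]
        · constructor
          · linarith [h2.1]
          · linarith [h2.2]
        · have : τ₂ - 2 * Real.pi - (τ₁ - 2 * Real.pi) = τ₂ - τ₁ := by ring
          rw [this]; exact ⟨h3.1, hd⟩
        · exact (PCCC_shift1 s t τ₁ τ₂).symm
      · -- τ₁ = 2π and τ₂ - τ₁ = 2π : shift τ₁ by 2π, τ₂ by 4π
        refine ⟨s, τ₁ - 2 * Real.pi, τ₂ - 2 * Real.pi - 2 * Real.pi, hs, ?_, ?_, ?_, ?_⟩
        · constructor <;> linarith
        · constructor
          · linarith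
          · linarith [h2.2]
        · constructor
          · linarith
          · linarith
        · rw [PCCC_shift2 s t (τ₁ - 2 * Real.pi) (τ₂ - 2 * Real.pi) hs, PCCC_shift1]
  rw [hEq]
  exact (hKcompact.image hfc).isClosed
end

section
/- Define ξ = s·x + 1 − sσ·sin φ and η = y + σ·cos φ, where (x, y, φ) = P_CSC^{s,σ}(t; τ₁, τ₂) is the CSC endpoint. Then ξ = (1 − sσ) cos τ₁ − (τ₂ − τ₁) sin τ₁, η = (1 − sσ) sin τ₁ + (τ₂ − τ₁) cos τ₁, and consequently ξ² + η² = (1 − sσ)² + (τ₂ − τ₁)². -/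
theorem CSC_reduced_coordinates (s σ τ₁ τ₂ t : ℝ)
    (hs : s = 1 ∨ s = -1) (hσ : σ = 1 ∨ σ = -1)
    (h0 : 0 ≤ τ₁) (h1 : τ₁ ≤ τ₂) (h2 : τ₂ ≤ t)
    (x y φ ξ η : ℝ)
    (hx : x = s * (Real.cos τ₁ - 1 - (τ₂ - τ₁) * Real.sin τ₁)
        + σ * (Real.cos (s * τ₁ + σ * (t - τ₂)) - Real.cos τ₁))
    (hy : y = Real.sin τ₁ + (τ₂ - τ₁) * Real.cos τ₁
        - σ * (s * Real.sin τ₁ - Real.sin (s * τ₁ + σ * (t - τ₂))))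
    (hφ : φ = Real.pi / 2 + s * τ₁ + σ * (t - τ₂))
    (hξ : ξ = s * x + 1 - s * σ * Real.sin φ)
    (hη : η = y + σ * Real.cos φ) :
    ξ = (1 - s * σ) * Real.cos τ₁ - (τ₂ - τ₁) * Real.sin τ₁ ∧
    η = (1 - s * σ) * Real.sin τ₁ + (τ₂ - τ₁) * Real.cos τ₁ ∧
    ξ ^ 2 + η ^ 2 = (1 - s * σ) ^ 2 + (τ₂ - τ₁) ^ 2 := by
  have hsin : Real.sin φ = Real.cos (s * τ₁ + σ * (t - τ₂)) := by
    rw [hφ, add_assoc, add_comm, Real.sin_add_pi_div_two]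
  have hcos : Real.cos φ = -Real.sin (s * τ₁ + σ * (t - τ₂)) := by
    rw [hφ, add_assoc, add_comm, Real.cos_add_pi_div_two]
  have hξ' : ξ = (1 - s * σ) * Real.cos τ₁ - (τ₂ - τ₁) * Real.sin τ₁ := by
    rw [hξ, hx, hsin]; rcases hs with rfl | rfl <;> rcases hσ with rfl | rfl <;> ring
  have hη' : η = (1 - s * σ) * Real.sin τ₁ + (τ₂ - τ₁) * Real.cos τ₁ := by
    rw [hη, hy, hcos]; rcases hs with rfl | rfl <;> rcases hσ with rfl | rfl <;> ring
  refine ⟨hξ', hη', ?_⟩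
  rw [hξ', hη']
  have := Real.sin_sq_add_cos_sq τ₁
  nlinarith [this]
end

section
/- Let ξ = (1 − cos δ) cos τ₁ − sin δ sin τ₁ and η = (1 − cos δ) sin τ₁ + sin δ cos τ₁ for some δ ∈ [0, 2π), and set ρ² = ξ² + η² = 2 − 2 cos δ, assumed positive. Let μ = 1 if δ ∈ [0, π] and μ = −1 if δ ∈ (π, 2π). Then cos τ₁ = μ·(η/ρ²)·sqrt(1 − (1 − ρ²/2)²) + ξ/2 and sin τ₁ = −μ·(ξ/ρ²)·sqrt(1 − (1 − ρ²/2)²) + η/2. -/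
/-!
Writing the data as complex numbers, `ξ + iη = e^{iτ₁} (1 - e^{-iδ})`, so the endpoint relations are
a rotation of `(cos τ₁, sin τ₁)` by the vector `(1 - cos δ, sin δ)` of squared length
`ρ² = 2 - 2 cos δ`; inverting it gives `cos τ₁ = (sin δ · η + (1 - cos δ) ξ) / ρ²` and similarly for
`sin τ₁`. Since `1 - cos δ = ρ²/2`, and `sin δ = μ √(1 - cos² δ)` with `cos δ = 1 - ρ²/2`, this is
the claimed formula.
-/

open Real

lemma sq_add_sq_mul_eq_of_rotation {a b c s ξ η : ℝ}
    (hξ : ξ = a * c - b * s) (hη : η = a * s + b * c) :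
    (a ^ 2 + b ^ 2) * c = a * ξ + b * η ∧ (a ^ 2 + b ^ 2) * s = a * η - b * ξ := by
  subst hξ hη
  constructor <;> ring

lemma sq_add_sq_of_rotation {a b c s ξ η : ℝ}
    (hξ : ξ = a * c - b * s) (hη : η = a * s + b * c) :
    ξ ^ 2 + η ^ 2 = (a ^ 2 + b ^ 2) * (c ^ 2 + s ^ 2) := by
  subst hξ hη
  ring

lemma Real.one_sub_cos_sq_add_sin_sq (x : ℝ) : (1 - cos x) ^ 2 + sin x ^ 2 = 2 - 2 * cos x := by
  linear_combination sin_sq_add_cos_sq x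

lemma Real.ite_mul_sqrt_one_sub_cos_sq {x : ℝ} (hx : x ∈ Set.Ico 0 (2 * π)) :
    (if x ≤ π then 1 else -1) * √(1 - cos x ^ 2) = sin x := by
  rw [← sin_sq, sqrt_sq_eq_abs]
  split_ifs with h
  · rw [abs_of_nonneg (sin_nonneg_of_nonneg_of_le_pi hx.1 h), one_mul]
  · have hneg : sin x ≤ 0 := by
      rw [← sin_sub_two_pi]
      exact sin_nonpos_of_nonpos_of_neg_pi_le (by linarith [hx.2]) (by linarith)
    rw [abs_of_nonpos hneg]
    ring

theorem CCC_inversion (δ τ₁ ξ η μ : ℝ)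
    (hδ : δ ∈ Set.Ico 0 (2 * Real.pi))
    (hξ : ξ = (1 - Real.cos δ) * Real.cos τ₁ - Real.sin δ * Real.sin τ₁)
    (hη : η = (1 - Real.cos δ) * Real.sin τ₁ + Real.sin δ * Real.cos τ₁)
    (hμ : μ = if δ ≤ Real.pi then 1 else -1)
    (hρ : 0 < 2 - 2 * Real.cos δ) :
    ξ ^ 2 + η ^ 2 = 2 - 2 * Real.cos δ ∧
    Real.cos τ₁ = μ * (η / (ξ ^ 2 + η ^ 2))
        * Real.sqrt (1 - (1 - (ξ ^ 2 + η ^ 2) / 2) ^ 2) + ξ / 2 ∧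
    Real.sin τ₁ = -(μ * (ξ / (ξ ^ 2 + η ^ 2))
        * Real.sqrt (1 - (1 - (ξ ^ 2 + η ^ 2) / 2) ^ 2)) + η / 2 := by
  have hρ_eq : ξ ^ 2 + η ^ 2 = 2 - 2 * cos δ := by
    rw [sq_add_sq_of_rotation hξ hη, one_sub_cos_sq_add_sin_sq, cos_sq_add_sin_sq, mul_one]
  have hsign : μ * √(1 - (1 - (ξ ^ 2 + η ^ 2) / 2) ^ 2) = sin δ := by
    rw [hμ, hρ_eq, ← ite_mul_sqrt_one_sub_cos_sq hδ]
    congr 3; ring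
  have hcos_ne : 1 - cos δ ≠ 0 := by linarith
  obtain ⟨hcos, hsin⟩ := sq_add_sq_mul_eq_of_rotation hξ hη
  rw [one_sub_cos_sq_add_sin_sq] at hcos hsin
  refine ⟨hρ_eq, ?_, ?_⟩
  · rw [mul_comm μ, mul_assoc, hsign, hρ_eq]
    field_simp
    linear_combination hcos
  · rw [mul_comm μ, mul_assoc, hsign, hρ_eq]
    field_simp
    linear_combination hsin
end
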